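/- Let γ ∈ (0,2) and let L be slowly varying at infinity. If there exists C > 0 such that G(x) ≤ C·x^{2−γ}·L(1/x) for all x ∈ (0,π], then there exists C' > 0 such that V(n) ≤ C'·n^γ·L(n) for every integer n ≥ 1. -/

import Mathlib

open MeasureTheory Filter Set Topology

/-- Fejér-type kernel: `I_n(y) = sin²(ny/2)/sin²(y/2)` for `y ≠ 0`, `I_n(0) = n²`. -/
noncomputable def fejerKernel (n : ℕ) (y : ℝ) : ℝ :=
  if y = 0 then (n : ℝ) ^ 2 else Real.sin (n * y / 2) ^ 2 / Real.sin (y / 2) ^ 2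

/-- Variance functional `V(n) = ∫_{[0,π]} I_n(y) dμ(y)`. -/
noncomputable def varV (μ : Measure ℝ) (n : ℕ) : ℝ :=
  ∫ y in Icc 0 Real.pi, fejerKernel n y ∂μ

/-- `G(x) = μ([0,x])` for a measure `μ` on `[0,π]`. -/
noncomputable def specG (μ : Measure ℝ) (x : ℝ) : ℝ :=
  (μ (Icc 0 x)).toReal

/-- A function `L : (0,∞) → (0,∞)` is slowly varying at infinity if
`L(λx)/L(x) → 1` as `x → ∞` for every `λ > 0`. -/
def SlowlyVarying (L : ℝ → ℝ) : Prop :=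
  ∀ lam : ℝ, 0 < lam → Tendsto (fun x => L (lam * x) / L x) atTop (𝓝 1)

/-!
Split `[0, π]` at `1/n` and at a fixed point `1/x₀`. On `[0, 1/n]` the kernel is at most `n²`,
which gives `n² G(1/n) ≤ C n^γ L(n)`. On `(1/n, 1/x₀)` use `I_n(y) ≤ π²/y²` on the dyadic shells
`[2^k/n, 2^(k+1)/n)`: Potter's bound `L(1/y) ≤ A (ny)^(γ/2) L(n)` turns `G(2^(k+1)/n)` into
`O(2^(k(2-γ/2)) n^(γ-2) L(n))`, so the shells contribute a geometric series in `2^(-kγ/2)` of total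
size `O(n^γ L(n))`. On `[1/x₀, π]` the kernel is bounded, and the resulting constant is
`O(n^γ L(n))` because `n^γ L(n)` is eventually bounded below, again by Potter's bound.

Potter's bound follows from the uniform convergence theorem for the increments of `log L(eᵘ)`,
which is proved with Egorov's theorem and the fact that two subsets of `[0, 3]` of total measure
more than `3` must meet.
-/

open scoped Pointwise

theorem abs_sin_nat_mul_le (n : ℕ) (θ : ℝ) : |Real.sin (n * θ)| ≤ n * |Real.sin θ| := by
  induction n with
  | zero => simp
  | succ m ih =>
    rw [Nat.cast_succ, add_mul, one_mul, Real.sin_add, add_mul, one_mul]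
    calc |Real.sin (m * θ) * Real.cos θ + Real.cos (m * θ) * Real.sin θ|
        ≤ |Real.sin (m * θ)| * |Real.cos θ| + |Real.cos (m * θ)| * |Real.sin θ| := by
          simpa only [abs_mul] using
            abs_add_le (Real.sin (m * θ) * Real.cos θ) (Real.cos (m * θ) * Real.sin θ)
      _ ≤ |Real.sin (m * θ)| * 1 + 1 * |Real.sin θ| := by
          gcongr <;> exact Real.abs_cos_le_one _
      _ ≤ m * |Real.sin θ| + |Real.sin θ| := by linarith

theorem fejerKernel_nonneg (n : ℕ) (y : ℝ) : 0 ≤ fejerKernel n y := by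
  unfold fejerKernel; split <;> positivity

theorem measurable_fejerKernel (n : ℕ) : Measurable (fejerKernel n) := by
  unfold fejerKernel
  refine Measurable.ite (measurableSet_singleton 0) measurable_const ?_
  fun_prop

theorem fejerKernel_le_sq (n : ℕ) (y : ℝ) : fejerKernel n y ≤ (n : ℝ) ^ 2 := by
  unfold fejerKernel
  split_ifs with hy
  · rfl
  rcases eq_or_ne (Real.sin (y / 2)) 0 with hs | hs
  · simp [hs]
  rw [div_le_iff₀ (by positivity), ← sq_abs, ← sq_abs (Real.sin _), ← mul_pow, mul_div_assoc]
  gcongr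
  exact abs_sin_nat_mul_le n (y / 2)

theorem fejerKernel_le_pi_sq_div_sq (n : ℕ) {y : ℝ} (hy : 0 < y) (hyπ : y ≤ Real.pi) :
    fejerKernel n y ≤ Real.pi ^ 2 / y ^ 2 := by
  rw [fejerKernel, if_neg hy.ne']
  have hsin : y / Real.pi ≤ Real.sin (y / 2) := by
    have := Real.mul_le_sin (x := y / 2) (by positivity) (by linarith)
    rwa [show 2 / Real.pi * (y / 2) = y / Real.pi by ring] at this
  calc Real.sin (n * y / 2) ^ 2 / Real.sin (y / 2) ^ 2 ≤ 1 / (y / Real.pi) ^ 2 := by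
        gcongr
        exact Real.sin_sq_le_one _
    _ = Real.pi ^ 2 / y ^ 2 := by rw [div_pow, one_div_div]

theorem nonempty_inter_vadd_of_volume_gt {S T : Set ℝ} (hS : S ⊆ Icc 0 2) (hT : T ⊆ Icc 0 2)
    (hTm : MeasurableSet T) {t : ℝ} (ht : t ∈ Icc (0 : ℝ) 1)
    (hvol : ENNReal.ofReal 3 < volume S + volume T) : (S ∩ (t +ᵥ T)).Nonempty := by
  refine nonempty_inter_of_measure_lt_add volume (hTm.const_vadd t) (u := Icc 0 3) ?_ ?_ ?_
  · exact hS.trans (Icc_subset_Icc le_rfl (by norm_num))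
  · rintro _ ⟨v, hv, rfl⟩
    have := hT hv
    constructor <;> simp only [vadd_eq_add] <;> linarith [ht.1, ht.2, this.1, this.2]
  · rwa [measure_vadd, Real.volume_Icc, sub_zero]

theorem Measurable.exists_large_tendstoUniformlyOn_add_sub {f : ℝ → ℝ} (hf : Measurable f)
    (h : ∀ t, Tendsto (fun x => f (x + t) - f x) atTop (𝓝 0)) {xs : ℕ → ℝ}
    (hxs : Tendsto xs atTop atTop) :
    ∃ S ⊆ Icc (0 : ℝ) 2, MeasurableSet S ∧ ENNReal.ofReal (7 / 4) ≤ volume S ∧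
      TendstoUniformlyOn (fun n u => f (xs n + u) - f (xs n)) 0 atTop S := by
  obtain ⟨E, hE, hEm, hEvol, hunif⟩ := tendstoUniformlyOn_of_ae_tendsto (μ := volume)
    (s := Icc (0 : ℝ) 2) (g := 0)
    (fun n => ((hf.comp (measurable_const_add (xs n))).sub_const _).stronglyMeasurable)
    stronglyMeasurable_const measurableSet_Icc (by simp)
    (ae_of_all _ fun u _ => (h u).comp hxs) (by norm_num : (0 : ℝ) < 1 / 4)
  refine ⟨Icc 0 2 \ E, sdiff_subset, measurableSet_Icc.diff hEm, ?_, hunif⟩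
  calc ENNReal.ofReal (7 / 4) = ENNReal.ofReal 2 - ENNReal.ofReal (1 / 4) := by
        rw [← ENNReal.ofReal_sub _ (by norm_num)]; norm_num
    _ ≤ volume (Icc (0 : ℝ) 2) - volume E := by
        rw [Real.volume_Icc, sub_zero]; gcongr
    _ ≤ volume (Icc 0 2 \ E) := le_measure_sdiff

theorem Measurable.tendstoUniformlyOn_add_sub {f : ℝ → ℝ} (hf : Measurable f)
    (h : ∀ t, Tendsto (fun x => f (x + t) - f x) atTop (𝓝 0)) :
    TendstoUniformlyOn (fun x t => f (x + t) - f x) 0 atTop (Icc 0 1) := by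
  rw [Metric.tendstoUniformlyOn_iff]
  intro ε hε
  by_contra hbad
  have hfreq := frequently_atTop.1 (not_eventually.1 hbad)
  push Not at hfreq
  choose xs hxs ts hts hbig using fun n : ℕ => hfreq n
  have hxs_top : Tendsto xs atTop atTop := tendsto_atTop_mono hxs tendsto_natCast_atTop_atTop
  have hys_top : Tendsto (fun n => xs n + ts n) atTop atTop :=
    tendsto_atTop_mono (fun n => le_add_of_nonneg_right (hts n).1) hxs_top
  obtain ⟨S, hS, -, hSvol, hSunif⟩ := hf.exists_large_tendstoUniformlyOn_add_sub h hxs_top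
  obtain ⟨T, hT, hTm, hTvol, hTunif⟩ := hf.exists_large_tendstoUniformlyOn_add_sub h hys_top
  rw [Metric.tendstoUniformlyOn_iff] at hSunif hTunif
  obtain ⟨n, hnS, hnT⟩ := ((hSunif _ (half_pos hε)).and (hTunif _ (half_pos hε))).exists
  have hvol : ENNReal.ofReal 3 < volume S + volume T := by
    calc ENNReal.ofReal 3 < ENNReal.ofReal (7 / 4) + ENNReal.ofReal (7 / 4) := by
          rw [← ENNReal.ofReal_add (by norm_num) (by norm_num)]
          exact (ENNReal.ofReal_lt_ofReal_iff (by norm_num)).2 (by norm_num)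
      _ ≤ volume S + volume T := add_le_add hSvol hTvol
  -- `f (xs n + ts n) - f (xs n)` is the difference of an increment that is small on `S` and one
  -- that is small on `T`.
  obtain ⟨_, huS, v, hvT, rfl⟩ := nonempty_inter_vadd_of_volume_gt hS hT hTm (hts n) hvol
  have h₁ := hnS _ huS
  have h₂ := hnT v hvT
  simp only [Pi.zero_apply, dist_zero_left, Real.norm_eq_abs, vadd_eq_add, ← add_assoc] at h₁ h₂
  have hbig' := hbig n
  simp only [Pi.zero_apply, dist_zero_left, Real.norm_eq_abs] at hbig'
  have hsplit : f (xs n + ts n) - f (xs n) =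
      (f (xs n + ts n + v) - f (xs n)) - (f (xs n + ts n + v) - f (xs n + ts n)) := by ring
  rw [hsplit] at hbig'
  linarith [abs_sub (f (xs n + ts n + v) - f (xs n)) (f (xs n + ts n + v) - f (xs n + ts n))]

theorem abs_add_sub_le_of_forall_mem_Icc {f : ℝ → ℝ} {X ε : ℝ}
    (h : ∀ x ≥ X, ∀ t ∈ Icc (0 : ℝ) 1, |f (x + t) - f x| ≤ ε) {a t : ℝ} (ha : X ≤ a)
    (ht : 0 ≤ t) : |f (a + t) - f a| ≤ (t + 1) * ε := by
  have hε : 0 ≤ ε := by simpa using h X le_rfl 0 (by simp)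
  have key : ∀ m : ℕ, ∀ a ≥ X, ∀ t ∈ Icc (0 : ℝ) m, |f (a + t) - f a| ≤ m * ε := by
    intro m
    induction m with
    | zero =>
      intro a _ t ht
      simp [le_antisymm (by simpa using ht.2) ht.1]
    | succ m ih =>
      intro a ha t ht
      have hτ : min t 1 ∈ Icc (0 : ℝ) 1 := ⟨le_min ht.1 zero_le_one, min_le_right _ _⟩
      have hrest : t - min t 1 ∈ Icc (0 : ℝ) m := by
        push_cast at ht
        constructor <;> cases min_choice t 1 <;> simp_all
      have h₂ := ih (a + min t 1) (by linarith [hτ.1]) _ hrest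
      rw [add_add_sub_cancel] at h₂
      calc |f (a + t) - f a| ≤ |f (a + t) - f (a + min t 1)| + |f (a + min t 1) - f a| :=
            abs_sub_le _ _ _
        _ ≤ m * ε + ε := add_le_add h₂ (h a ha _ hτ)
        _ = (m + 1 : ℕ) * ε := by push_cast; ring
  calc |f (a + t) - f a| ≤ ⌈t⌉₊ * ε := key _ a ha t ⟨ht, Nat.le_ceil t⟩
    _ ≤ (t + 1) * ε := by gcongr; exact (Nat.ceil_lt_add_one ht).le

theorem SlowlyVarying.tendsto_log_exp_add_sub {L : ℝ → ℝ} (hL : SlowlyVarying L)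
    (hLpos : ∀ x > (0 : ℝ), 0 < L x) (t : ℝ) :
    Tendsto (fun x => Real.log (L (Real.exp (x + t))) - Real.log (L (Real.exp x))) atTop (𝓝 0) := by
  have hratio := ((hL _ (Real.exp_pos t)).comp Real.tendsto_exp_atTop).log one_ne_zero
  rw [Real.log_one] at hratio
  refine hratio.congr fun x => ?_
  simp only [Function.comp_apply, ← Real.exp_add, add_comm t x]
  exact Real.log_div (hLpos _ (Real.exp_pos _)).ne' (hLpos _ (Real.exp_pos _)).ne'

theorem SlowlyVarying.exists_potter_bound {L : ℝ → ℝ} (hL : SlowlyVarying L)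
    (hLmeas : Measurable L) (hLpos : ∀ x > (0 : ℝ), 0 < L x) {ε : ℝ} (hε : 0 < ε) :
    ∃ A > (0 : ℝ), ∃ x₀ ≥ (1 : ℝ), ∀ ⦃y x : ℝ⦄, x₀ ≤ y → y ≤ x →
      L y ≤ A * (x / y) ^ ε * L x := by
  set f : ℝ → ℝ := fun u => Real.log (L (Real.exp u))
  have hf : Measurable f := Real.measurable_log.comp (hLmeas.comp Real.measurable_exp)
  obtain ⟨X, hX⟩ := (Metric.tendstoUniformlyOn_iff.1
    (hf.tendstoUniformlyOn_add_sub (hL.tendsto_log_exp_add_sub hLpos)) ε hε).exists_forall_of_atTop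
  have hX' : ∀ x ≥ X, ∀ t ∈ Icc (0 : ℝ) 1, |f (x + t) - f x| ≤ ε := fun x hx t ht => by
    simpa [Real.dist_eq, abs_sub_comm] using (hX x hx t ht).le
  refine ⟨Real.exp ε, Real.exp_pos ε, max (Real.exp X) 1, le_max_right _ _, fun y x hy hyx => ?_⟩
  have hy0 : 0 < y := one_pos.trans_le ((le_max_right _ _).trans hy)
  have hx0 : 0 < x := hy0.trans_le hyx
  have hXy : X ≤ Real.log y := (Real.le_log_iff_exp_le hy0).2 ((le_max_left _ _).trans hy)
  have hlog : 0 ≤ Real.log x - Real.log y := sub_nonneg.2 (Real.log_le_log hy0 hyx)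
  have hb := (abs_le.1 (abs_add_sub_le_of_forall_mem_Icc hX' hXy hlog)).1
  simp only [f, add_sub_cancel, Real.exp_log hx0, Real.exp_log hy0] at hb
  calc L y = Real.exp (Real.log (L y)) := (Real.exp_log (hLpos y hy0)).symm
    _ ≤ Real.exp (ε + ε * Real.log (x / y) + Real.log (L x)) := by
        rw [Real.log_div hx0.ne' hy0.ne']
        gcongr
        linarith
    _ = Real.exp ε * (x / y) ^ ε * L x := by
        rw [Real.exp_add, Real.exp_add, Real.exp_log (hLpos x hx0),
          Real.rpow_def_of_pos (div_pos hx0 hy0), mul_comm ε]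

theorem SlowlyVarying.exists_pos_eventually_le_rpow_mul {L : ℝ → ℝ} (hL : SlowlyVarying L)
    (hLmeas : Measurable L) (hLpos : ∀ x > (0 : ℝ), 0 < L x) {γ : ℝ} (hγ : 0 < γ) :
    ∃ c > (0 : ℝ), ∀ᶠ x in atTop, c ≤ x ^ γ * L x := by
  obtain ⟨A, hA, x₀, hx₀, hpotter⟩ := hL.exists_potter_bound hLmeas hLpos hγ
  refine ⟨L x₀ / A, div_pos (hLpos x₀ (by linarith)) hA, ?_⟩
  filter_upwards [eventually_ge_atTop x₀] with x hx
  have hx0 : 0 < x := by linarith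
  rw [div_le_iff₀ hA]
  calc L x₀ ≤ A * (x / x₀) ^ γ * L x := hpotter le_rfl hx
    _ ≤ A * x ^ γ * L x := by
        gcongr
        · exact (hLpos x hx0).le
        · exact div_le_self hx0.le hx₀
    _ = x ^ γ * L x * A := by ring

theorem one_div_sq_mul_rpow_dyadic (K a β : ℝ) (ha : 0 < a) (k : ℕ) :
    1 / (2 ^ k * a) ^ 2 * (K * (2 ^ (k + 1) * a) ^ β) =
      K * 2 ^ β * a ^ (β - 2) * ((2 : ℝ) ^ (β - 2)) ^ k := by
  rw [Real.mul_rpow (by positivity) ha.le, ← Real.rpow_pow_comm zero_le_two, Real.rpow_sub ha,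
    Real.rpow_sub two_pos, Real.rpow_two, Real.rpow_two, div_pow, pow_succ]
  field_simp
  rw [← pow_mul, ← pow_mul, mul_comm 2 k]
  ring

theorem lintegral_one_div_sq_Ioo_le {μ : Measure ℝ} {a b K β : ℝ} (ha : 0 < a) (hK : 0 ≤ K)
    (hβ₀ : 0 ≤ β) (hβ₂ : β < 2)
    (hμ : ∀ z, a ≤ z → z ≤ b → μ (Icc 0 z) ≤ ENNReal.ofReal (K * z ^ β)) :
    ∫⁻ y in Ioo a b, ENNReal.ofReal (1 / y ^ 2) ∂μ ≤
      ENNReal.ofReal (K * 2 ^ β / (1 - 2 ^ (β - 2)) * a ^ (β - 2)) := by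
  rcases le_or_gt b a with hba | hab
  · simp [Ioo_eq_empty (not_lt.2 hba)]
  set r : ℝ := 2 ^ (β - 2)
  have hr₀ : 0 ≤ r := by positivity
  have hr₁ : r < 1 := Real.rpow_lt_one_of_one_lt_of_neg one_lt_two (by linarith)
  set shell : ℕ → Set ℝ := fun k => Ioo a b ∩ Ico (2 ^ k * a) (2 ^ (k + 1) * a)
  have hcover : Ioo a b ⊆ ⋃ k, shell k := by
    intro y hy
    obtain ⟨k, hk₁, hk₂⟩ := exists_nat_pow_near ((one_le_div ha).2 hy.1.le) one_lt_two
    exact mem_iUnion.2 ⟨k, hy, (le_div_iff₀ ha).1 hk₁, (div_lt_iff₀ ha).1 hk₂⟩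
  have hterm : ∀ k : ℕ, ∫⁻ y in shell k, ENNReal.ofReal (1 / y ^ 2) ∂μ ≤
      ENNReal.ofReal (K * 2 ^ β * a ^ (β - 2) * r ^ k) := by
    intro k
    set z : ℝ := min (2 ^ (k + 1) * a) b
    have hza : a ≤ z := le_min (le_mul_of_one_le_left ha.le (one_le_pow₀ one_le_two)) hab.le
    calc ∫⁻ y in shell k, ENNReal.ofReal (1 / y ^ 2) ∂μ
        ≤ ∫⁻ _ in shell k, ENNReal.ofReal (1 / (2 ^ k * a) ^ 2) ∂μ := by
          refine setLIntegral_mono measurable_const fun y hy => ENNReal.ofReal_le_ofReal ?_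
          gcongr
          exact hy.2.1
      _ = ENNReal.ofReal (1 / (2 ^ k * a) ^ 2) * μ (shell k) := setLIntegral_const _ _
      _ ≤ ENNReal.ofReal (1 / (2 ^ k * a) ^ 2) * μ (Icc 0 z) := by
          gcongr
          exact fun y hy => ⟨ha.le.trans hy.1.1.le, le_min hy.2.2.le hy.1.2.le⟩
      _ ≤ ENNReal.ofReal (1 / (2 ^ k * a) ^ 2) * ENNReal.ofReal (K * (2 ^ (k + 1) * a) ^ β) := by
          grw [hμ z hza (min_le_right _ _)]
          gcongr
          · exact ha.le.trans hza
          · exact min_le_left _ _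
      _ = ENNReal.ofReal (K * 2 ^ β * a ^ (β - 2) * r ^ k) := by
          rw [← ENNReal.ofReal_mul (by positivity), one_div_sq_mul_rpow_dyadic K a β ha k]
  calc ∫⁻ y in Ioo a b, ENNReal.ofReal (1 / y ^ 2) ∂μ
      ≤ ∫⁻ y in ⋃ k, shell k, ENNReal.ofReal (1 / y ^ 2) ∂μ := lintegral_mono_set hcover
    _ ≤ ∑' k, ∫⁻ y in shell k, ENNReal.ofReal (1 / y ^ 2) ∂μ := lintegral_iUnion_le _ _
    _ ≤ ∑' k, ENNReal.ofReal (K * 2 ^ β * a ^ (β - 2) * r ^ k) := ENNReal.tsum_le_tsum hterm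
    _ = ENNReal.ofReal (∑' k, K * 2 ^ β * a ^ (β - 2) * r ^ k) :=
        (ENNReal.ofReal_tsum_of_nonneg (fun k => by positivity)
          ((summable_geometric_of_lt_one hr₀ hr₁).mul_left _)).symm
    _ = ENNReal.ofReal (K * 2 ^ β / (1 - r) * a ^ (β - 2)) := by
        rw [tsum_mul_left, tsum_geometric_of_lt_one hr₀ hr₁]
        ring_nf

theorem exists_pos_forall_le_mul_of_le_mul_add {f g : ℕ → ℝ} {C D c : ℝ} (hf : ∀ n, 0 ≤ f n)
    (hg : ∀ n, 1 ≤ n → 0 < g n) (hc : 0 < c) (hD : 0 ≤ D) (hlow : ∀ᶠ n in atTop, c ≤ g n)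
    (hfg : ∀ n, 1 ≤ n → f n ≤ C * g n + D) : ∃ C' > (0 : ℝ), ∀ n, 1 ≤ n → f n ≤ C' * g n := by
  have hO : f =O[cofinite] g := by
    rw [Nat.cofinite_eq_atTop]
    refine Asymptotics.IsBigO.of_bound (C + D / c) ?_
    filter_upwards [hlow, eventually_ge_atTop 1] with n hcn hn
    rw [Real.norm_of_nonneg (hf n), Real.norm_of_nonneg (hg n hn).le]
    calc f n ≤ C * g n + D := hfg n hn
      _ ≤ C * g n + D / c * g n := by
          gcongr
          rw [div_mul_eq_mul_div, le_div_iff₀ hc]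
          gcongr
      _ = (C + D / c) * g n := by ring
  obtain ⟨C', hC', hbound⟩ := Asymptotics.bound_of_isBigO_cofinite hO
  refine ⟨C', hC', fun n hn => ?_⟩
  have := hbound (hg n hn).ne'
  rwa [Real.norm_of_nonneg (hf n), Real.norm_of_nonneg (hg n hn).le] at this

theorem varV_eq_toReal_lintegral (μ : Measure ℝ) (n : ℕ) :
    varV μ n = (∫⁻ y in Icc 0 Real.pi, ENNReal.ofReal (fejerKernel n y) ∂μ).toReal :=
  integral_eq_lintegral_of_nonneg_ae (ae_of_all _ (fejerKernel_nonneg n))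
    (measurable_fejerKernel n).aestronglyMeasurable

theorem varV_nonneg (μ : Measure ℝ) (n : ℕ) : 0 ≤ varV μ n :=
  integral_nonneg (fejerKernel_nonneg n)

theorem measure_Icc_le_ofReal_of_specG_le {μ : Measure ℝ} [IsFiniteMeasure μ] {x b : ℝ}
    (h : specG μ x ≤ b) : μ (Icc 0 x) ≤ ENNReal.ofReal b := by
  rw [← ENNReal.ofReal_toReal (measure_ne_top μ (Icc 0 x))]
  exact ENNReal.ofReal_le_ofReal h

theorem setLIntegral_fejerKernel_Icc_le (μ : Measure ℝ) {x₀ : ℝ} (hx₀ : 0 < x₀) (n : ℕ) :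
    ∫⁻ y in Icc (1 / x₀) Real.pi, ENNReal.ofReal (fejerKernel n y) ∂μ ≤
      ENNReal.ofReal (Real.pi ^ 2 * x₀ ^ 2) * μ (Icc 0 Real.pi) := by
  calc ∫⁻ y in Icc (1 / x₀) Real.pi, ENNReal.ofReal (fejerKernel n y) ∂μ
      ≤ ∫⁻ _ in Icc (1 / x₀) Real.pi, ENNReal.ofReal (Real.pi ^ 2 * x₀ ^ 2) ∂μ := by
        refine setLIntegral_mono measurable_const fun y hy => ENNReal.ofReal_le_ofReal ?_
        have hy₀ : 0 < y := (one_div_pos.2 hx₀).trans_le hy.1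
        calc fejerKernel n y ≤ Real.pi ^ 2 / y ^ 2 := fejerKernel_le_pi_sq_div_sq n hy₀ hy.2
          _ ≤ Real.pi ^ 2 / (1 / x₀) ^ 2 := by gcongr; exact hy.1
          _ = Real.pi ^ 2 * x₀ ^ 2 := by rw [one_div, inv_pow, div_inv_eq_mul]
    _ = ENNReal.ofReal (Real.pi ^ 2 * x₀ ^ 2) * μ (Icc (1 / x₀) Real.pi) := setLIntegral_const _ _
    _ ≤ ENNReal.ofReal (Real.pi ^ 2 * x₀ ^ 2) * μ (Icc 0 Real.pi) := by
        gcongr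
        positivity

section SpectralBound

variable {μ : Measure ℝ} [IsFiniteMeasure μ] {γ C : ℝ} {L : ℝ → ℝ}
  (hG : ∀ x : ℝ, 0 < x → x ≤ Real.pi → specG μ x ≤ C * x ^ (2 - γ) * L (1 / x))
include hG

theorem setLIntegral_fejerKernel_Icc_zero_le {n : ℕ} (hn : 1 ≤ n) :
    ∫⁻ y in Icc 0 (1 / n), ENNReal.ofReal (fejerKernel n y) ∂μ ≤
      ENNReal.ofReal (C * n ^ γ * L n) := by
  have hn₀ : (0 : ℝ) < n := by exact_mod_cast hn
  have hnπ : 1 / (n : ℝ) ≤ Real.pi :=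
    ((div_le_one hn₀).2 (by exact_mod_cast hn)).trans (by linarith [Real.pi_gt_three])
  calc ∫⁻ y in Icc 0 (1 / n), ENNReal.ofReal (fejerKernel n y) ∂μ
      ≤ ∫⁻ _ in Icc 0 (1 / n), ENNReal.ofReal ((n : ℝ) ^ 2) ∂μ :=
        setLIntegral_mono measurable_const fun y _ =>
          ENNReal.ofReal_le_ofReal (fejerKernel_le_sq n y)
    _ = ENNReal.ofReal ((n : ℝ) ^ 2) * μ (Icc 0 (1 / n)) := setLIntegral_const _ _
    _ ≤ ENNReal.ofReal ((n : ℝ) ^ 2) *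
          ENNReal.ofReal (C * (1 / (n : ℝ)) ^ (2 - γ) * L (1 / (1 / n))) := by
        gcongr
        exact measure_Icc_le_ofReal_of_specG_le (hG _ (by positivity) hnπ)
    _ = ENNReal.ofReal (C * n ^ γ * L n) := by
        have hpow : (n : ℝ) ^ 2 * (1 / (n : ℝ)) ^ (2 - γ) = n ^ γ := by
          rw [one_div, Real.inv_rpow hn₀.le, ← Real.rpow_neg hn₀.le, ← Real.rpow_two,
            ← Real.rpow_add hn₀]
          ring_nf
        rw [← ENNReal.ofReal_mul (by positivity), one_div_one_div, ← hpow]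
        ring_nf

variable {A x₀ : ℝ}

theorem measure_Icc_le_of_potter (hC : 0 ≤ C) (hx₀ : 1 ≤ x₀)
    (hpotter : ∀ ⦃y x : ℝ⦄, x₀ ≤ y → y ≤ x → L y ≤ A * (x / y) ^ (γ / 2) * L x)
    {n z : ℝ} (hn : 0 < n) (hz₁ : 1 / n ≤ z) (hz₂ : z ≤ 1 / x₀) :
    μ (Icc 0 z) ≤ ENNReal.ofReal (C * A * n ^ (γ / 2) * L n * z ^ (2 - γ / 2)) := by
  have hz : 0 < z := (one_div_pos.2 hn).trans_le hz₁
  have hzπ : z ≤ Real.pi :=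
    hz₂.trans (((div_le_one (by linarith)).2 hx₀).trans (by linarith [Real.pi_gt_three]))
  refine measure_Icc_le_ofReal_of_specG_le ((hG z hz hzπ).trans ?_)
  have hLz := hpotter ((le_one_div (by linarith) hz).2 hz₂) ((one_div_le hz hn).2 hz₁)
  calc C * z ^ (2 - γ) * L (1 / z) ≤ C * z ^ (2 - γ) * (A * (n / (1 / z)) ^ (γ / 2) * L n) := by
        gcongr
    _ = C * A * n ^ (γ / 2) * L n * z ^ (2 - γ / 2) := by
        rw [one_div, div_inv_eq_mul, Real.mul_rpow hn.le hz.le,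
          show 2 - γ / 2 = (2 - γ) + γ / 2 by ring, Real.rpow_add hz]
        ring

theorem setLIntegral_fejerKernel_Ioo_le (hγ₀ : 0 < γ) (hγ₄ : γ ≤ 4) (hC : 0 ≤ C) (hA : 0 ≤ A)
    (hx₀ : 1 ≤ x₀)
    (hpotter : ∀ ⦃y x : ℝ⦄, x₀ ≤ y → y ≤ x → L y ≤ A * (x / y) ^ (γ / 2) * L x)
    {n : ℕ} (hn : 1 ≤ n) (hLn : 0 ≤ L n) :
    ∫⁻ y in Ioo (1 / n) (1 / x₀), ENNReal.ofReal (fejerKernel n y) ∂μ ≤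
      ENNReal.ofReal
        (Real.pi ^ 2 * (C * A * 2 ^ (2 - γ / 2) / (1 - 2 ^ (-(γ / 2)))) * n ^ γ * L n) := by
  have hn₀ : (0 : ℝ) < n := by exact_mod_cast hn
  have hK : 0 ≤ C * A * n ^ (γ / 2) * L n := by positivity
  have hdyadic := lintegral_one_div_sq_Ioo_le (μ := μ) (b := 1 / x₀) (one_div_pos.2 hn₀) hK
    (by linarith) (by linarith) fun z hz₁ hz₂ =>
      measure_Icc_le_of_potter hG hC hx₀ hpotter hn₀ hz₁ hz₂
  calc ∫⁻ y in Ioo (1 / n) (1 / x₀), ENNReal.ofReal (fejerKernel n y) ∂μ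
      ≤ ∫⁻ y in Ioo (1 / n) (1 / x₀),
          ENNReal.ofReal (Real.pi ^ 2) * ENNReal.ofReal (1 / y ^ 2) ∂μ := by
        refine setLIntegral_mono' measurableSet_Ioo fun y hy => ?_
        have hy₀ : 0 < y := (one_div_pos.2 hn₀).trans hy.1
        have hyπ : y ≤ Real.pi :=
          hy.2.le.trans (((div_le_one (by linarith)).2 hx₀).trans (by linarith [Real.pi_gt_three]))
        rw [← ENNReal.ofReal_mul (by positivity), mul_one_div]
        exact ENNReal.ofReal_le_ofReal (fejerKernel_le_pi_sq_div_sq n hy₀ hyπ)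
    _ = ENNReal.ofReal (Real.pi ^ 2) *
          ∫⁻ y in Ioo (1 / n) (1 / x₀), ENNReal.ofReal (1 / y ^ 2) ∂μ :=
        lintegral_const_mul _ (by fun_prop)
    _ ≤ _ := by
        grw [hdyadic, ← ENNReal.ofReal_mul (by positivity)]
        refine le_of_eq (congrArg ENNReal.ofReal ?_)
        have hpow : (1 / (n : ℝ)) ^ (2 - γ / 2 - 2) * n ^ (γ / 2) = n ^ γ := by
          rw [one_div, Real.inv_rpow hn₀.le, ← Real.rpow_neg hn₀.le, ← Real.rpow_add hn₀]
          ring_nf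
        rw [← hpow, show 2 - γ / 2 - 2 = -(γ / 2) by ring]
        ring

theorem varV_le_of_specG_le (hγ₀ : 0 < γ) (hγ₄ : γ ≤ 4) (hC : 0 ≤ C) (hA : 0 ≤ A) (hx₀ : 1 ≤ x₀)
    (hpotter : ∀ ⦃y x : ℝ⦄, x₀ ≤ y → y ≤ x → L y ≤ A * (x / y) ^ (γ / 2) * L x)
    {n : ℕ} (hn : 1 ≤ n) (hLn : 0 ≤ L n) :
    varV μ n ≤
      (C + Real.pi ^ 2 * (C * A * 2 ^ (2 - γ / 2) / (1 - 2 ^ (-(γ / 2))))) * (n ^ γ * L n) +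
        Real.pi ^ 2 * x₀ ^ 2 * μ.real (Icc 0 Real.pi) := by
  have hcover :
      Icc 0 Real.pi ⊆ Icc 0 (1 / (n : ℝ)) ∪ Ioo (1 / n) (1 / x₀) ∪ Icc (1 / x₀) Real.pi := by
    intro y hy
    by_cases h₁ : y ≤ 1 / n
    · exact Or.inl (Or.inl ⟨hy.1, h₁⟩)
    by_cases h₂ : y < 1 / x₀
    · exact Or.inl (Or.inr ⟨not_le.1 h₁, h₂⟩)
    · exact Or.inr ⟨not_lt.1 h₂, hy.2⟩
  have hB : 0 ≤ C * A * 2 ^ (2 - γ / 2) / (1 - 2 ^ (-(γ / 2))) :=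
    div_nonneg (by positivity)
      (sub_nonneg.2 (Real.rpow_le_one_of_one_le_of_nonpos one_le_two (by linarith)))
  rw [varV_eq_toReal_lintegral]
  refine ENNReal.toReal_le_of_le_ofReal (by positivity) ?_
  calc ∫⁻ y in Icc 0 Real.pi, ENNReal.ofReal (fejerKernel n y) ∂μ
      ≤ ∫⁻ y in Icc 0 (1 / (n : ℝ)) ∪ Ioo (1 / n) (1 / x₀) ∪ Icc (1 / x₀) Real.pi,
          ENNReal.ofReal (fejerKernel n y) ∂μ := lintegral_mono_set hcover
    _ ≤ ∫⁻ y in Icc 0 (1 / (n : ℝ)), ENNReal.ofReal (fejerKernel n y) ∂μ +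
          ∫⁻ y in Ioo (1 / (n : ℝ)) (1 / x₀), ENNReal.ofReal (fejerKernel n y) ∂μ +
          ∫⁻ y in Icc (1 / x₀) Real.pi, ENNReal.ofReal (fejerKernel n y) ∂μ := by
        grw [lintegral_union_le, lintegral_union_le]
    _ ≤ ENNReal.ofReal (C * n ^ γ * L n) +
          ENNReal.ofReal
            (Real.pi ^ 2 * (C * A * 2 ^ (2 - γ / 2) / (1 - 2 ^ (-(γ / 2)))) * n ^ γ * L n) +
          ENNReal.ofReal (Real.pi ^ 2 * x₀ ^ 2) * μ (Icc 0 Real.pi) := by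
        gcongr
        · exact setLIntegral_fejerKernel_Icc_zero_le hG hn
        · exact setLIntegral_fejerKernel_Ioo_le hG hγ₀ hγ₄ hC hA hx₀ hpotter hn hLn
        · exact setLIntegral_fejerKernel_Icc_le μ (by linarith) n
    _ = _ := by
        rw [← ofReal_measureReal, ← ENNReal.ofReal_mul (by positivity),
          ← ENNReal.ofReal_add (by positivity) (by positivity),
          ← ENNReal.ofReal_add (by positivity) (by positivity)]
        ring_nf

end SpectralBound

theorem variance_upper_of_spectral_upper_general (μ : Measure ℝ) [IsFiniteMeasure μ]
    (γ : ℝ) (hγ : γ ∈ Ioo (0 : ℝ) 2)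
    (L : ℝ → ℝ) (hLmeas : Measurable L) (hLpos : ∀ x > (0 : ℝ), 0 < L x)
    (hL : SlowlyVarying L)
    (hG : ∃ C > (0 : ℝ), ∀ x : ℝ, 0 < x → x ≤ Real.pi →
      specG μ x ≤ C * x ^ (2 - γ) * L (1 / x)) :
    ∃ C' > (0 : ℝ), ∀ n : ℕ, 1 ≤ n → varV μ n ≤ C' * (n : ℝ) ^ γ * L n := by
  obtain ⟨C, hC, hG⟩ := hG
  obtain ⟨A, hA, x₀, hx₀, hpotter⟩ := hL.exists_potter_bound hLmeas hLpos (half_pos hγ.1)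
  obtain ⟨c, hc, hlow⟩ := hL.exists_pos_eventually_le_rpow_mul hLmeas hLpos hγ.1
  have hn₀ : ∀ n : ℕ, 1 ≤ n → (0 : ℝ) < n := fun n hn => by exact_mod_cast hn
  obtain ⟨C', hC', hbound⟩ := exists_pos_forall_le_mul_of_le_mul_add (varV_nonneg μ)
    (fun n hn => mul_pos (Real.rpow_pos_of_pos (hn₀ n hn) γ) (hLpos n (hn₀ n hn))) hc
    (by positivity) (tendsto_natCast_atTop_atTop.eventually hlow) fun n hn =>
      varV_le_of_specG_le hG hγ.1 (by linarith [hγ.2]) hC.le hA.le hx₀ hpotter hn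
        (hLpos n (hn₀ n hn)).le
  exact ⟨C', hC', fun n hn => (hbound n hn).trans_eq (mul_assoc _ _ _).symm⟩

/-- If `G(x) ≤ C x^{2-γ} L(1/x)` on `(0,π]`, then `V(n) ≤ C' n^γ L(n)` for all `n ≥ 1`. -/
theorem variance_upper_of_spectral_upper (μ : Measure ℝ) [IsFiniteMeasure μ]
    (hsupp : μ (Icc 0 Real.pi)ᶜ = 0)
    (γ : ℝ) (hγ : γ ∈ Ioo (0 : ℝ) 2)
    (L : ℝ → ℝ) (hLmeas : Measurable L) (hLpos : ∀ x > (0 : ℝ), 0 < L x)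
    (hL : SlowlyVarying L)
    (hG : ∃ C > (0 : ℝ), ∀ x : ℝ, 0 < x → x ≤ Real.pi →
      specG μ x ≤ C * x ^ (2 - γ) * L (1 / x)) :
    ∃ C' > (0 : ℝ), ∀ n : ℕ, 1 ≤ n → varV μ n ≤ C' * (n : ℝ) ^ γ * L n :=
  variance_upper_of_spectral_upper_general μ γ hγ L hLmeas hLpos hL hG
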